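/- In the user-specific reward model, if estimated mean rewards μ̂^i_{k,n} satisfy |μ̂^i_{k,n} − μ^i_{k,n}| < Δ_min/(2M) for all i ∈ {1,…,M}, k ∈ {1,…,K} and n ∈ {1,…,M}, then every maximizer of the estimated total value α ↦ Σ_{i=1}^M μ̂^i_{α_i, n_{α_i}(α)} over α ∈ K^M belongs to the set A of optimal allocations (i.e., argmax_{α} Σ_{i=1}^M μ̂^i_{α_i, n_{α_i}(α)} ⊆ A). -/
import Mathlib


open Finset

/-- **Stability for user-specific rewards (Lemma 3).** If every user's estimated mean
reward of every resource-usage pair is within `Δ_min/(2M)` of the true mean reward, then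
every maximizer of the estimated total value over allocations `α ∈ K^M` is an optimal
allocation. -/
theorem stability_user_specific
    (M K : ℕ) (hM : 0 < M) (hK : 0 < K)
    -- true and estimated user-specific mean rewards of resource-usage pairs
    (μ : Fin M → Fin K → ℕ → ℝ)
    (hμ : ∀ i k, ∀ n ∈ Finset.Icc 1 M, μ i k n ∈ Set.Ioc (0 : ℝ) 1)
    (μhat : Fin M → Fin K → ℕ → ℝ)
    -- `n_k(α)`: number of users using resource `k` under allocation `α`
    (nusers : (Fin M → Fin K) → Fin K → ℕ)
    (hnusers : ∀ α k, nusers α k = (Finset.univ.filter fun i => α i = k).card)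
    -- total value of an allocation and the optimal value
    (v : (Fin M → Fin K) → ℝ) (hv : ∀ α, v α = ∑ i, μ i (α i) (nusers α (α i)))
    (vstar : ℝ) (hvstar : IsGreatest (Set.range v) vstar)
    -- the set of optimal allocations `A` and the minimum suboptimality gap `Δ_min`
    (A : Set (Fin M → Fin K)) (hAdef : A = {α | v α = vstar})
    (Δmin : ℝ)
    (hΔ : IsLeast {d : ℝ | ∃ α, v α < vstar ∧ d = vstar - v α} Δmin)
    (hest : ∀ i k, ∀ n ∈ Finset.Icc 1 M, |μhat i k n - μ i k n| < Δmin / (2 * M)) :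
    ∀ α : Fin M → Fin K,
      (∀ β : Fin M → Fin K,
        (∑ i, μhat i (β i) (nusers β (β i))) ≤ ∑ i, μhat i (α i) (nusers α (α i))) →
      α ∈ A := by
  intro α hmax
  by_contra hA
  rw [hAdef] at hA
  have hne : Nonempty (Fin M) := Fin.pos_iff_nonempty.mp hM
  have hvle : ∀ γ, v γ ≤ vstar := fun γ => hvstar.2 ⟨γ, rfl⟩
  have hlt : v α < vstar := lt_of_le_of_ne (hvle α) hA
  have hgap : Δmin ≤ vstar - v α := hΔ.2 ⟨α, hlt, rfl⟩
  have key : ∀ γ : Fin M → Fin K,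
      |(∑ i, μhat i (γ i) (nusers γ (γ i))) - v γ| < Δmin / 2 := by
    intro γ
    have hmem : ∀ i : Fin M, nusers γ (γ i) ∈ Finset.Icc 1 M := by
      intro i
      rw [hnusers, Finset.mem_Icc]
      constructor
      · exact Finset.card_pos.mpr ⟨i, by simp⟩
      · simpa using (Finset.card_filter_le Finset.univ (fun j => γ j = γ i))
    rw [hv, ← Finset.sum_sub_distrib]
    calc |∑ i, (μhat i (γ i) (nusers γ (γ i)) - μ i (γ i) (nusers γ (γ i)))|
        ≤ ∑ i, |μhat i (γ i) (nusers γ (γ i)) - μ i (γ i) (nusers γ (γ i))| :=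
          Finset.abs_sum_le_sum_abs _ _
      _ < ∑ _i : Fin M, Δmin / (2 * M) :=
          Finset.sum_lt_sum_of_nonempty Finset.univ_nonempty
            (fun i _ => hest i (γ i) _ (hmem i))
      _ = Δmin / 2 := by
          rw [Finset.sum_const, Finset.card_univ, Fintype.card_fin, nsmul_eq_mul]
          have : (M : ℝ) ≠ 0 := Nat.cast_ne_zero.mpr hM.ne'
          field_simp
  obtain ⟨β, hβ⟩ := hvstar.1
  have h1 := key α
  have h2 := key β
  have h3 := hmax β
  rw [abs_sub_lt_iff] at h1 h2
  rw [hβ] at h2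
  linarith [h1.1, h2.2, hgap]
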